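/- arXiv:1702.03908 — 3 statements merged into one kernel-verified Lean document; each statement's English description precedes it below -/
import Mathlib

section
/- Let f(q1,q2) = α(q1+q2) − β(q2 − P·q1)² on the rectangle [0,Q1]×[0,Q2] with P > 0, β = min(1/(1+2P²Q1+ε), 1/(1+2Q2+ε)) for some ε > 0, and α = 1 − β. Then for all (q1,q2) in the rectangle, ∂f/∂q1 > 0 and ∂f/∂q2 > 0. -/
/-! Both partial derivatives are affine in `(q1, q2)`: `∂₁f = 1 - β(1 + 2P²q1 - 2Pq2)` and
`∂₂f = 1 - β(1 + 2q2 - 2Pq1)`. On the rectangle the bracketed factors are at most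
`1 + 2P²Q1` and `1 + 2Q2` respectively, and `β` is chosen below the reciprocal of these
bounds plus `ε`, so both derivatives stay positive. -/

lemma hasDerivAt_merge_fst (α β P q1 q2 : ℝ) :
    HasDerivAt (fun x => α * (x + q2) - β * (q2 - P * x) ^ 2)
      (α + 2 * β * P * (q2 - P * q1)) q1 := by
  have hlin : HasDerivAt (fun x : ℝ => q2 - P * x) (-P) q1 := by
    simpa using ((hasDerivAt_id' q1).const_mul P).const_sub q2
  exact ((((hasDerivAt_id' q1).add_const q2).const_mul α).sub
    ((hlin.pow 2).const_mul β)).congr_deriv (by ring)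

lemma hasDerivAt_merge_snd (α β P q1 q2 : ℝ) :
    HasDerivAt (fun y => α * (q1 + y) - β * (y - P * q1) ^ 2)
      (α - 2 * β * (q2 - P * q1)) q2 :=
  ((((hasDerivAt_id' q2).const_add q1).const_mul α).sub
    ((((hasDerivAt_id' q2).sub_const (P * q1)).pow 2).const_mul β)).congr_deriv (by ring)

lemma mul_lt_one_of_le_one_div_add {β D ε t : ℝ} (hβ : 0 < β) (hε : 0 < ε)
    (hβD : β ≤ 1 / (D + ε)) (ht : t ≤ D) : β * t < 1 := by
  have hDε : 0 < D + ε := one_div_pos.mp (hβ.trans_le hβD)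
  have hβDε : β * (D + ε) ≤ 1 := (le_div_iff₀ hDε).mp hβD
  nlinarith

theorem stmt0_general (Q1 Q2 P ε : ℝ) (hP : 0 < P) (hε : 0 < ε)
    (β : ℝ) (hβ : β = min (1 / (1 + 2 * P ^ 2 * Q1 + ε)) (1 / (1 + 2 * Q2 + ε)))
    (α : ℝ) (hα : α = 1 - β)
    (f : ℝ → ℝ → ℝ)
    (hf : ∀ q1 q2, f q1 q2 = α * (q1 + q2) - β * (q2 - P * q1) ^ 2) :
    ∀ q1 ∈ Set.Icc (0 : ℝ) Q1, ∀ q2 ∈ Set.Icc (0 : ℝ) Q2,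
      0 < deriv (fun x => f x q2) q1 ∧ 0 < deriv (fun y => f q1 y) q2 := by
  rintro q1 ⟨hq1, hq1Q⟩ q2 ⟨hq2, hq2Q⟩
  have hQ1 : 0 ≤ Q1 := hq1.trans hq1Q
  have hQ2 : 0 ≤ Q2 := hq2.trans hq2Q
  have hβpos : 0 < β := hβ ▸ lt_min (by positivity) (by positivity)
  have hfst : β * (1 + 2 * P ^ 2 * q1 - 2 * P * q2) < 1 :=
    mul_lt_one_of_le_one_div_add hβpos hε (hβ ▸ min_le_left _ _) (by nlinarith)
  have hsnd : β * (1 + 2 * q2 - 2 * P * q1) < 1 :=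
    mul_lt_one_of_le_one_div_add hβpos hε (hβ ▸ min_le_right _ _) (by nlinarith)
  simp only [hf]
  rw [(hasDerivAt_merge_fst α β P q1 q2).deriv, (hasDerivAt_merge_snd α β P q1 q2).deriv, hα]
  constructor <;> linarith

/-- strict monotonicity of the merge objective
`f(q1,q2) = α(q1+q2) − β(q2 − P q1)²` in each variable on `[0,Q1]×[0,Q2]`,
with `β = min(1/(1+2P²Q1+ε), 1/(1+2Q2+ε))` and `α = 1 − β`. -/
theorem stmt0 (Q1 Q2 P ε : ℝ) (hQ1 : 0 < Q1) (hQ2 : 0 < Q2) (hP : 0 < P) (hε : 0 < ε)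
    (β : ℝ) (hβ : β = min (1 / (1 + 2 * P ^ 2 * Q1 + ε)) (1 / (1 + 2 * Q2 + ε)))
    (α : ℝ) (hα : α = 1 - β)
    (f : ℝ → ℝ → ℝ)
    (hf : ∀ q1 q2, f q1 q2 = α * (q1 + q2) - β * (q2 - P * q1) ^ 2) :
    ∀ q1 ∈ Set.Icc (0 : ℝ) Q1, ∀ q2 ∈ Set.Icc (0 : ℝ) Q2,
      0 < deriv (fun x => f x q2) q1 ∧ 0 < deriv (fun y => f q1 y) q2 :=
  stmt0_general Q1 Q2 P ε hP hε β hβ α hα f hf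
end

section
/- Consider the linear program: maximize Σ_{j=1}^{n} c_j x_j subject to 0 ≤ x_j ≤ M for all j and cumulative constraints Σ_{η=1}^{j} x_η ≤ B_j for all j, where B_1 ≤ B_2 ≤ … ≤ B_n and c_1 > c_2 > … > c_n > 0. Then the unique optimal solution is given greedily: x_1* = min(M, B_1), and x_j* = min(M, B_j − Σ_{η<j} x_η*) for j ≥ 2. -/
/-!
The greedy partial sums are `∑_{η ≤ j} x η = min (∑_{η < j} x η + M) (B j)`, and by induction
along the order they dominate the partial sums of every feasible `y`.  So `z = y - x` has
nonpositive prefix sums, and for strictly decreasing positive weights Abel summation writes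
`∑ c j * z j` as a combination of these prefix sums with positive coefficients `c j - c (j + 1)`
(and `c` at the last index): it is `≤ 0`, with equality only if every prefix sum, hence `z`,
vanishes.
-/

open Finset Order

section PrefixSums

variable {ι : Type*} [LinearOrder ι]

def PrefixSumsNonpos (s : Finset ι) (z : ι → ℝ) : Prop :=
  ∀ k ∈ s, ∑ j ∈ s with j ≤ k, z j ≤ 0

lemma PrefixSumsNonpos.of_insert_max {s : Finset ι} {a : ι} {z : ι → ℝ}
    (hz : PrefixSumsNonpos (insert a s) z) (ha : ∀ j ∈ s, j < a) :
    PrefixSumsNonpos s z ∧ ∑ j ∈ insert a s, z j ≤ 0 := by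
  refine ⟨fun k hk => ?_, ?_⟩
  · have := hz k (mem_insert_of_mem hk)
    rwa [filter_insert, if_neg (ha k hk).not_ge] at this
  · have := hz a (mem_insert_self a s)
    rwa [filter_true_of_mem fun j hj => (mem_insert.1 hj).elim le_of_eq
      fun hj => (ha j hj).le] at this

lemma Finset.sum_insert_mul_eq_sum_sub_mul_add {R : Type*} [CommRing R] {s : Finset ι} {a : ι}
    (ha : a ∉ s) (c z : ι → R) :
    ∑ j ∈ insert a s, c j * z j = ∑ j ∈ s, (c j - c a) * z j + c a * ∑ j ∈ insert a s, z j := by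
  simp only [sum_insert ha, sub_mul, sum_sub_distrib, mul_add]
  rw [mul_sum]
  ring

theorem Finset.sum_mul_nonpos_of_antitoneOn (s : Finset ι) {c z : ι → ℝ}
    (hc : AntitoneOn c s) (hc0 : ∀ j ∈ s, 0 ≤ c j) (hz : PrefixSumsNonpos s z) :
    ∑ j ∈ s, c j * z j ≤ 0 := by
  classical
  induction s using Finset.induction_on_max generalizing c with
  | empty => simp
  | insert a s ha ih =>
    obtain ⟨hz_tail, hz_total⟩ := hz.of_insert_max ha
    rw [sum_insert_mul_eq_sum_sub_mul_add fun h => (ha a h).false]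
    have htail : ∑ j ∈ s, (c j - c a) * z j ≤ 0 := by
      refine ih (fun i hi j hj hij => ?_) (fun j hj => ?_) hz_tail
      · exact sub_le_sub_right (hc (mem_insert_of_mem hi) (mem_insert_of_mem hj) hij) _
      · exact sub_nonneg.2 (hc (mem_insert_of_mem hj) (mem_insert_self a s) (ha j hj).le)
    nlinarith [hc0 a (mem_insert_self a s)]

theorem Finset.eq_zero_of_sum_mul_eq_zero_of_strictAntiOn (s : Finset ι) {c z : ι → ℝ}
    (hc : StrictAntiOn c s) (hc0 : ∀ j ∈ s, 0 < c j) (hz : PrefixSumsNonpos s z)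
    (h : ∑ j ∈ s, c j * z j = 0) : ∀ j ∈ s, z j = 0 := by
  classical
  induction s using Finset.induction_on_max generalizing c with
  | empty => simp
  | insert a s ha ih =>
    obtain ⟨hz_tail, hz_total⟩ := hz.of_insert_max ha
    have has : a ∉ s := fun h => (ha a h).false
    rw [sum_insert_mul_eq_sum_sub_mul_add has] at h
    have hc' : StrictAntiOn (fun j => c j - c a) s := fun i hi j hj hij =>
      sub_lt_sub_right (hc (mem_insert_of_mem hi) (mem_insert_of_mem hj) hij) _
    have hc0' : ∀ j ∈ s, 0 < c j - c a := fun j hj =>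
      sub_pos.2 (hc (mem_insert_of_mem hj) (mem_insert_self a s) (ha j hj))
    have htail := sum_mul_nonpos_of_antitoneOn s hc'.antitoneOn (fun j hj => (hc0' j hj).le)
      hz_tail
    have hca := hc0 a (mem_insert_self a s)
    have hs : ∀ j ∈ s, z j = 0 := ih hc' hc0' hz_tail (by nlinarith)
    have hz_total0 : ∑ j ∈ insert a s, z j = 0 := by nlinarith
    intro j hj
    rcases mem_insert.1 hj with rfl | hj
    · rwa [sum_insert has, sum_eq_zero hs, add_zero] at hz_total0
    · exact hs j hj

end PrefixSums

section Greedy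

variable {ι : Type*} [LinearOrder ι] [LocallyFiniteOrderBot ι] {M : ℝ} {B x y : ι → ℝ}

def IsFeasible (M : ℝ) (B y : ι → ℝ) : Prop :=
  ∀ j, 0 ≤ y j ∧ y j ≤ M ∧ ∑ η ∈ Iic j, y η ≤ B j

def IsGreedy (M : ℝ) (B x : ι → ℝ) : Prop :=
  ∀ j, x j = min M (B j - ∑ η ∈ Iio j, x η)

lemma IsGreedy.sum_Iic (hx : IsGreedy M B x) (j : ι) :
    ∑ η ∈ Iic j, x η = min (∑ η ∈ Iio j, x η + M) (B j) := by
  rw [← add_sum_Iio_eq_sum_Iic, hx j, ← min_add_add_right, sub_add_cancel, add_comm M]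

variable [PredOrder ι]

lemma IsGreedy.sum_Iio_le (hB0 : ∀ j, 0 ≤ B j) (hB : Monotone B) (hx : IsGreedy M B x)
    (j : ι) : ∑ η ∈ Iio j, x η ≤ B j := by
  by_cases hj : IsMin j
  · simpa [Iio_eq_empty.2 hj] using hB0 j
  · rw [← Iic_pred_eq_Iio_of_not_isMin hj, hx.sum_Iic]
    exact (min_le_right _ _).trans (hB (pred_le j))

lemma IsGreedy.isFeasible (hM : 0 ≤ M) (hB0 : ∀ j, 0 ≤ B j) (hB : Monotone B)
    (hx : IsGreedy M B x) : IsFeasible M B x := fun j =>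
  ⟨hx j ▸ le_min hM (sub_nonneg.2 (hx.sum_Iio_le hB0 hB j)), hx j ▸ min_le_left _ _,
    hx.sum_Iic j ▸ min_le_right _ _⟩

lemma IsGreedy.sum_Iic_feasible_le [WellFoundedLT ι] (hx : IsGreedy M B x)
    (hy : IsFeasible M B y) (j : ι) : ∑ η ∈ Iic j, y η ≤ ∑ η ∈ Iic j, x η := by
  induction j using WellFoundedLT.induction with | _ j ih
  have hIio : ∑ η ∈ Iio j, y η ≤ ∑ η ∈ Iio j, x η := by
    by_cases hj : IsMin j
    · simp [Iio_eq_empty.2 hj]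
    · rw [← Iic_pred_eq_Iio_of_not_isMin hj]
      exact ih _ (pred_lt_of_not_isMin hj)
  rw [hx.sum_Iic]
  refine le_min ?_ (hy j).2.2
  rw [← add_sum_Iio_eq_sum_Iic]
  linarith [(hy j).2.1]

end Greedy

/-- greedy LP: maximize `Σ c_j x_j` subject to `0 ≤ x_j ≤ M` and
cumulative constraints `Σ_{η≤j} x_η ≤ B_j`, with `B` nondecreasing,
`c` strictly decreasing and positive.  The greedy solution
`x*_j = min(M, B_j − Σ_{η<j} x*_η)` is feasible and the unique optimum. -/
theorem stmt9 (n : ℕ) (c B : Fin n → ℝ) (M : ℝ) (hM : 0 ≤ M)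
    (hB0 : ∀ j : Fin n, 0 ≤ B j)
    (hBmono : ∀ i j : Fin n, i ≤ j → B i ≤ B j)
    (hcpos : ∀ j, 0 < c j)
    (hcdec : ∀ i j : Fin n, i < j → c j < c i)
    (x : Fin n → ℝ)
    (hx : ∀ j, x j = min M (B j - ∑ η ∈ Finset.Iio j, x η)) :
    (∀ j, 0 ≤ x j ∧ x j ≤ M ∧ ∑ η ∈ Finset.Iic j, x η ≤ B j) ∧
      ∀ y : Fin n → ℝ,
        (∀ j, 0 ≤ y j ∧ y j ≤ M ∧ ∑ η ∈ Finset.Iic j, y η ≤ B j) →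
        (∑ j, c j * y j ≤ ∑ j, c j * x j) ∧
          (∑ j, c j * y j = ∑ j, c j * x j → y = x) := by
  have hgreedy : IsGreedy M B x := hx
  refine ⟨hgreedy.isFeasible hM hB0 hBmono, fun y hy => ?_⟩
  have hc : StrictAntiOn c (univ : Finset (Fin n)) := fun i _ j _ hij => hcdec i j hij
  have hz : PrefixSumsNonpos univ (y - x) := fun k _ => by
    simp only [filter_ge_eq_Iic, Pi.sub_apply, sum_sub_distrib, sub_nonpos]
    exact hgreedy.sum_Iic_feasible_le hy k
  have hdiff : ∑ j, c j * (y - x) j = ∑ j, c j * y j - ∑ j, c j * x j := by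
    simp only [Pi.sub_apply, mul_sub, sum_sub_distrib]
  refine ⟨?_, fun heq => funext fun j => ?_⟩
  · have := sum_mul_nonpos_of_antitoneOn univ hc.antitoneOn (fun j _ => (hcpos j).le) hz
    linarith
  · have := eq_zero_of_sum_mul_eq_zero_of_strictAntiOn univ hc (fun j _ => hcpos j) hz
      (by rw [hdiff, heq, sub_self]) j (mem_univ j)
    exact sub_eq_zero.1 this
end

section
/- Consider the two-interval merge problem: maximize f over {(q1(1),q2(1),q1(2),q2(2)) : cumulative constraints Σ_{η≤j} q_l(η)Δt_η ≤ N_l(j) for l ∈ {1,2} (sending bounds, nondecreasing in j) and Σ_{η≤j} (q1(η)+q2(η))Δt_η ≤ N_3(j) (receiving bound), all flows in [0, q^max]}. Suppose f is differentiable concave and satisfies: ∂f/∂q_l(1)/Δt_1 > ∂f/∂q_l(2)/Δt_2 > 0 for l ∈ {1,2}. Then any maximizer (q*) of f maximizes throughput at interval 1, i.e., q1*(1) + q2*(1) = max{q1+q2 : q1Δt_1 ≤ N_1(1), q2Δt_1 ≤ N_2(1), (q1+q2)Δt_1 ≤ N_3(1), 0 ≤ q_l ≤ q^max}. -/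
/-!
If a maximizer left first-interval capacity unused on some link, shift flow of that link from
interval 2 to interval 1, keeping its cumulative volume (or emptying interval 2 if it holds too
little). Since interval 1 is worth more per unit time and interval 2 has positive marginal value,
this is a strict ascent direction into the convex feasible set, contradicting the first-order
optimality condition at a maximizer.
-/

section FirstOrder

variable {E : Type*} [NormedAddCommGroup E] [NormedSpace ℝ E] {f : E → ℝ} {s : Set E} {a y : E}

theorem IsMaxOn.fderiv_sub_nonpos (h : IsMaxOn f s a) (hs : Convex ℝ s) (ha : a ∈ s)
    (hy : y ∈ s) (hf : DifferentiableAt ℝ f a) : fderiv ℝ f a (y - a) ≤ 0 :=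
  h.localize.hasFDerivWithinAt_nonpos hf.hasFDerivAt.hasFDerivWithinAt
    (sub_mem_posTangentConeAt_of_segment_subset (hs.segment_subset ha hy))

/-- `δ • e - γ • e'` is a strict ascent direction at `a`, so it cannot lead back into `s`. -/
theorem IsMaxOn.add_smul_sub_smul_notMem (h : IsMaxOn f s a) (hs : Convex ℝ s) (ha : a ∈ s)
    (hf : DifferentiableAt ℝ f a) {e e' : E} {τ₁ τ₂ δ γ : ℝ} (hτ₁ : 0 < τ₁) (hτ₂ : 0 < τ₂)
    (hg : fderiv ℝ f a e' / τ₂ < fderiv ℝ f a e / τ₁) (hg' : 0 < fderiv ℝ f a e' / τ₂)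
    (hδ : 0 < δ) (hγδ : γ * τ₂ ≤ δ * τ₁) : a + δ • e - γ • e' ∉ s := by
  intro hy
  have hascent := h.fderiv_sub_nonpos hs ha hy hf
  rw [add_sub_assoc, add_sub_cancel_left, map_sub, map_smul, map_smul, smul_eq_mul,
    smul_eq_mul] at hascent
  have hcross := (div_lt_div_iff₀ hτ₂ hτ₁).1 hg
  have hpos := (div_pos_iff_of_pos_right hτ₂).1 hg'
  nlinarith [mul_le_mul_of_nonneg_right hγδ hpos.le, mul_pos hδ (sub_pos.2 hcross)]

end FirstOrder

theorem exists_mul_eq_min {c s τ : ℝ} (hτ : 0 < τ) (hc : 0 ≤ c) (hs : 0 ≤ s) :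
    ∃ γ, 0 ≤ γ ∧ γ ≤ c ∧ γ * τ = min (c * τ) s :=
  ⟨min (c * τ) s / τ, by positivity, (div_le_iff₀ hτ).2 (min_le_left _ _),
    div_mul_cancel₀ _ hτ.ne'⟩

section MergeProblem

variable {Δt1 Δt2 qmax N11 N12 N21 N22 N31 N32 a b c d x : ℝ}

/-- Coordinates are `(q₁(1), q₂(1), q₁(2), q₂(2))`. -/
def mergeFeasible (Δt1 Δt2 qmax N11 N12 N21 N22 N31 N32 : ℝ) : Set (ℝ × ℝ × ℝ × ℝ) :=
  {q : ℝ × ℝ × ℝ × ℝ |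
      0 ≤ q.1 ∧ q.1 ≤ qmax ∧ 0 ≤ q.2.1 ∧ q.2.1 ≤ qmax ∧
      0 ≤ q.2.2.1 ∧ q.2.2.1 ≤ qmax ∧ 0 ≤ q.2.2.2 ∧ q.2.2.2 ≤ qmax ∧
      q.1 * Δt1 ≤ N11 ∧ q.1 * Δt1 + q.2.2.1 * Δt2 ≤ N12 ∧
      q.2.1 * Δt1 ≤ N21 ∧ q.2.1 * Δt1 + q.2.2.2 * Δt2 ≤ N22 ∧
      (q.1 + q.2.1) * Δt1 ≤ N31 ∧
      (q.1 + q.2.1) * Δt1 + (q.2.2.1 + q.2.2.2) * Δt2 ≤ N32}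

/-- Raising link 1's first-interval flow from `a` to `x` stays feasible once its second-interval
flow `c` is lowered so as to keep the cumulative link-1 volume, or to zero if `c` is too small;
the margin `qmax * Δt2` in the sending and receiving bounds covers the latter case. -/
theorem exists_shift_mem_mergeFeasible_left (hΔt1 : 0 < Δt1) (hΔt2 : 0 < Δt2)
    (hN1mono : N11 + qmax * Δt2 ≤ N12) (hN3mono : N31 + qmax * Δt2 ≤ N32)
    (hq : (a, b, c, d) ∈ mergeFeasible Δt1 Δt2 qmax N11 N12 N21 N22 N31 N32)
    (hax : a < x) (hx : x ≤ qmax) (hxN : x * Δt1 ≤ N11) (hxbN : (x + b) * Δt1 ≤ N31) :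
    ∃ δ, 0 < δ ∧ ∃ γ, γ * Δt2 ≤ δ * Δt1 ∧
      (a, b, c, d) + δ • (1, 0, 0, 0) - γ • (0, 0, 1, 0) ∈
        mergeFeasible Δt1 Δt2 qmax N11 N12 N21 N22 N31 N32 := by
  obtain ⟨ha0, haM, hb0, hbM, hc0, hcM, hd0, hdM, hA, hB, hC, hD, hE, hG⟩ := hq
  have hδ : 0 < x - a := sub_pos.2 hax
  obtain ⟨γ, hγ0, hγc, hγ⟩ := exists_mul_eq_min hΔt2 hc0 (mul_nonneg hδ.le hΔt1.le)
  refine ⟨x - a, hδ, γ, hγ ▸ min_le_right _ _, ?_⟩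
  have hqmaxΔ : 0 ≤ qmax * Δt2 := mul_nonneg (ha0.trans haM) hΔt2.le
  have hdΔ : d * Δt2 ≤ qmax * Δt2 := mul_le_mul_of_nonneg_right hdM hΔt2.le
  simp only [mergeFeasible, Prod.smul_mk, smul_eq_mul, Prod.mk_add_mk, Prod.mk_sub_mk,
    Set.mem_ofPred_eq, mul_zero, mul_one, add_zero, sub_zero]
  rcases min_choice (c * Δt2) ((x - a) * Δt1) with h | h <;> rw [h] at hγ <;>
    refine ⟨?_, ?_, ?_, ?_, ?_, ?_, ?_, ?_, ?_, ?_, ?_, ?_, ?_, ?_⟩ <;> linarith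

theorem exists_shift_mem_mergeFeasible_right (hΔt1 : 0 < Δt1) (hΔt2 : 0 < Δt2)
    (hN2mono : N21 + qmax * Δt2 ≤ N22) (hN3mono : N31 + qmax * Δt2 ≤ N32)
    (hq : (a, b, c, d) ∈ mergeFeasible Δt1 Δt2 qmax N11 N12 N21 N22 N31 N32)
    (hbx : b < x) (hx : x ≤ qmax) (hxN : x * Δt1 ≤ N21) (haxN : (a + x) * Δt1 ≤ N31) :
    ∃ δ, 0 < δ ∧ ∃ γ, γ * Δt2 ≤ δ * Δt1 ∧
      (a, b, c, d) + δ • (0, 1, 0, 0) - γ • (0, 0, 0, 1) ∈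
        mergeFeasible Δt1 Δt2 qmax N11 N12 N21 N22 N31 N32 := by
  obtain ⟨ha0, haM, hb0, hbM, hc0, hcM, hd0, hdM, hA, hB, hC, hD, hE, hG⟩ := hq
  have hδ : 0 < x - b := sub_pos.2 hbx
  obtain ⟨γ, hγ0, hγd, hγ⟩ := exists_mul_eq_min hΔt2 hd0 (mul_nonneg hδ.le hΔt1.le)
  refine ⟨x - b, hδ, γ, hγ ▸ min_le_right _ _, ?_⟩
  have hqmaxΔ : 0 ≤ qmax * Δt2 := mul_nonneg (hb0.trans hbM) hΔt2.le
  have hcΔ : c * Δt2 ≤ qmax * Δt2 := mul_le_mul_of_nonneg_right hcM hΔt2.le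
  simp only [mergeFeasible, Prod.smul_mk, smul_eq_mul, Prod.mk_add_mk, Prod.mk_sub_mk,
    Set.mem_ofPred_eq, mul_zero, mul_one, add_zero, sub_zero]
  rcases min_choice (d * Δt2) ((x - b) * Δt1) with h | h <;> rw [h] at hγ <;>
    refine ⟨?_, ?_, ?_, ?_, ?_, ?_, ?_, ?_, ?_, ?_, ?_, ?_, ?_, ?_⟩ <;> linarith

end MergeProblem

theorem stmt11_general (Δt1 Δt2 qmax : ℝ) (hΔt1 : 0 < Δt1) (hΔt2 : 0 < Δt2)
    (N11 N12 N21 N22 N31 N32 : ℝ)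
    (hN1mono : N11 + qmax * Δt2 ≤ N12) (hN2mono : N21 + qmax * Δt2 ≤ N22)
    (hN3mono : N31 + qmax * Δt2 ≤ N32)
    (F : Set (ℝ × ℝ × ℝ × ℝ))
    (hF : F = {q : ℝ × ℝ × ℝ × ℝ |
      0 ≤ q.1 ∧ q.1 ≤ qmax ∧ 0 ≤ q.2.1 ∧ q.2.1 ≤ qmax ∧
      0 ≤ q.2.2.1 ∧ q.2.2.1 ≤ qmax ∧ 0 ≤ q.2.2.2 ∧ q.2.2.2 ≤ qmax ∧
      q.1 * Δt1 ≤ N11 ∧ q.1 * Δt1 + q.2.2.1 * Δt2 ≤ N12 ∧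
      q.2.1 * Δt1 ≤ N21 ∧ q.2.1 * Δt1 + q.2.2.2 * Δt2 ≤ N22 ∧
      (q.1 + q.2.1) * Δt1 ≤ N31 ∧
      (q.1 + q.2.1) * Δt1 + (q.2.2.1 + q.2.2.2) * Δt2 ≤ N32})
    (f : ℝ × ℝ × ℝ × ℝ → ℝ) (hdiff : Differentiable ℝ f)
    (hconc : ConcaveOn ℝ F f)
    (hgrad1 : ∀ p ∈ F,
      fderiv ℝ f p (1, 0, 0, 0) / Δt1 > fderiv ℝ f p (0, 0, 1, 0) / Δt2 ∧
        0 < fderiv ℝ f p (0, 0, 1, 0) / Δt2)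
    (hgrad2 : ∀ p ∈ F,
      fderiv ℝ f p (0, 1, 0, 0) / Δt1 > fderiv ℝ f p (0, 0, 0, 1) / Δt2 ∧
        0 < fderiv ℝ f p (0, 0, 0, 1) / Δt2) :
    ∀ q ∈ F, (∀ p ∈ F, f p ≤ f q) →
      ∀ q1 q2 : ℝ, 0 ≤ q1 → q1 ≤ qmax → 0 ≤ q2 → q2 ≤ qmax →
        q1 * Δt1 ≤ N11 → q2 * Δt1 ≤ N21 → (q1 + q2) * Δt1 ≤ N31 →
        q1 + q2 ≤ q.1 + q.2.1 := by
  intro q hq hmax q1 q2 _ hq1M _ hq2M hq1N hq2N hq12N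
  change F = mergeFeasible Δt1 Δt2 qmax N11 N12 N21 N22 N31 N32 at hF
  subst hF
  obtain ⟨a, b, c, d⟩ := q
  by_contra! hlt
  have hmax' : IsMaxOn f _ (a, b, c, d) := isMaxOn_iff.2 hmax
  have hΔ {u v : ℝ} (h : u ≤ v) : u * Δt1 ≤ v * Δt1 := mul_le_mul_of_nonneg_right h hΔt1.le
  rcases lt_or_ge a q1 with ha | ha
  · obtain ⟨δ, hδ, γ, hγδ, hmem⟩ := exists_shift_mem_mergeFeasible_left hΔt1 hΔt2 hN1mono
      hN3mono hq (x := min q1 (q1 + q2 - b)) (lt_min ha (by linarith))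
      ((min_le_left _ _).trans hq1M) ((hΔ (min_le_left _ _)).trans hq1N)
      ((hΔ (by linarith [min_le_right q1 (q1 + q2 - b)])).trans hq12N)
    exact hmax'.add_smul_sub_smul_notMem hconc.1 hq (hdiff _) hΔt1 hΔt2 (hgrad1 _ hq).1
      (hgrad1 _ hq).2 hδ hγδ hmem
  · obtain ⟨δ, hδ, γ, hγδ, hmem⟩ := exists_shift_mem_mergeFeasible_right hΔt1 hΔt2 hN2mono
      hN3mono hq (x := min q2 (q1 + q2 - a)) (lt_min (by linarith) (by linarith))
      ((min_le_left _ _).trans hq2M) ((hΔ (min_le_left _ _)).trans hq2N)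
      ((hΔ (by linarith [min_le_right q2 (q1 + q2 - a)])).trans hq12N)
    exact hmax'.add_smul_sub_smul_notMem hconc.1 hq (hdiff _) hΔt1 hΔt2 (hgrad2 _ hq).1
      (hgrad2 _ hq).2 hδ hγδ hmem

/-- two-interval merge problem. A point of the feasible set is
`(q1(1), q2(1), q1(2), q2(2))`. If the differentiable concave objective weights
interval 1 strictly more than interval 2 (per unit time) for both upstream
links, then any maximizer maximizes the throughput `q1(1) + q2(1)` at the
first interval. -/
theorem stmt11 (Δt1 Δt2 qmax : ℝ) (hΔt1 : 0 < Δt1) (hΔt2 : 0 < Δt2)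
    (hqmax : 0 ≤ qmax)
    (N11 N12 N21 N22 N31 N32 : ℝ)
    (hN11 : 0 ≤ N11) (hN21 : 0 ≤ N21) (hN31 : 0 ≤ N31)
    (hN1mono : N11 + qmax * Δt2 ≤ N12) (hN2mono : N21 + qmax * Δt2 ≤ N22)
    (hN3mono : N31 + qmax * Δt2 ≤ N32)
    (F : Set (ℝ × ℝ × ℝ × ℝ))
    (hF : F = {q : ℝ × ℝ × ℝ × ℝ |
      0 ≤ q.1 ∧ q.1 ≤ qmax ∧ 0 ≤ q.2.1 ∧ q.2.1 ≤ qmax ∧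
      0 ≤ q.2.2.1 ∧ q.2.2.1 ≤ qmax ∧ 0 ≤ q.2.2.2 ∧ q.2.2.2 ≤ qmax ∧
      q.1 * Δt1 ≤ N11 ∧ q.1 * Δt1 + q.2.2.1 * Δt2 ≤ N12 ∧
      q.2.1 * Δt1 ≤ N21 ∧ q.2.1 * Δt1 + q.2.2.2 * Δt2 ≤ N22 ∧
      (q.1 + q.2.1) * Δt1 ≤ N31 ∧
      (q.1 + q.2.1) * Δt1 + (q.2.2.1 + q.2.2.2) * Δt2 ≤ N32})
    (f : ℝ × ℝ × ℝ × ℝ → ℝ) (hdiff : Differentiable ℝ f)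
    (hconc : ConcaveOn ℝ F f)
    (hgrad1 : ∀ p ∈ F,
      fderiv ℝ f p (1, 0, 0, 0) / Δt1 > fderiv ℝ f p (0, 0, 1, 0) / Δt2 ∧
        0 < fderiv ℝ f p (0, 0, 1, 0) / Δt2)
    (hgrad2 : ∀ p ∈ F,
      fderiv ℝ f p (0, 1, 0, 0) / Δt1 > fderiv ℝ f p (0, 0, 0, 1) / Δt2 ∧
        0 < fderiv ℝ f p (0, 0, 0, 1) / Δt2) :
    ∀ q ∈ F, (∀ p ∈ F, f p ≤ f q) →
      ∀ q1 q2 : ℝ, 0 ≤ q1 → q1 ≤ qmax → 0 ≤ q2 → q2 ≤ qmax →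
        q1 * Δt1 ≤ N11 → q2 * Δt1 ≤ N21 → (q1 + q2) * Δt1 ≤ N31 →
        q1 + q2 ≤ q.1 + q.2.1 :=
  stmt11_general Δt1 Δt2 qmax hΔt1 hΔt2 N11 N12 N21 N22 N31 N32 hN1mono hN2mono hN3mono F hF f hdiff
    hconc hgrad1 hgrad2
end
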